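/- arXiv:1605.03894 — 6 statements merged into one kernel-verified Lean document; each statement's English description precedes it below -/
import Mathlib

section
/- Let p ≥ 2 be an integer and let A and C be two N×N Hermitian matrices such that C has rank at most r. Then |tr((A+C)^p) - tr(A^p) - tr(C^p)| ≤ 2^p · r · max_{1≤k≤p-1} ‖A‖^k ‖C‖^{p-k}, where ‖·‖ denotes the operator norm. -/
/-!
Expanding `(A + C) ^ p` produces `2 ^ p` words in `A` and `C`, of which the two constant ones
are `A ^ p` and `C ^ p`. Every other word contains both letters; rotating it cyclically under
the trace puts a `C` in front, so its trace is `tr (C * M)` with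
`‖M‖ ≤ ‖A‖ ^ k * ‖C‖ ^ (p - 1 - k)` for some `1 ≤ k ≤ p - 1`. In an eigenbasis of `C` this
trace is a sum of `rank C` terms `λᵢ * Mᵢᵢ`, each of size at most `‖C‖ * ‖M‖`.
-/

/-- Operator (spectral) norm of a complex matrix. -/
noncomputable def opNorm {N : ℕ} (M : Matrix (Fin N) (Fin N) ℂ) : ℝ :=
  ‖Matrix.toEuclideanCLM (𝕜 := ℂ) M‖

open Finset Matrix
open scoped Matrix.Norms.L2Operator

theorem opNorm_eq_norm {N : ℕ} (M : Matrix (Fin N) (Fin N) ℂ) : opNorm M = ‖M‖ := rfl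

section Words

variable {R : Type*} {n : ℕ}

def wordProd [Monoid R] (a b : R) (f : Fin n → Bool) : R :=
  (List.ofFn fun i => bif f i then a else b).prod

@[simp]
theorem wordProd_const_true [Monoid R] (a b : R) :
    wordProd a b (fun _ : Fin n => true) = a ^ n := by
  simp [wordProd]

@[simp]
theorem wordProd_const_false [Monoid R] (a b : R) :
    wordProd a b (fun _ : Fin n => false) = b ^ n := by
  simp [wordProd]

theorem wordProd_cons [Monoid R] (a b : R) (c : Bool) (f : Fin n → Bool) :
    wordProd a b (Fin.cons c f : Fin (n + 1) → Bool) =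
      (bif c then a else b) * wordProd a b f := by
  simp [wordProd, List.ofFn_succ]

theorem wordProd_eq_pow_mul_pow [CommMonoid R] (a b : R) (f : Fin n → Bool) :
    wordProd a b f = a ^ #{i | f i = true} * b ^ (n - #{i | f i = true}) := by
  simp only [wordProd, List.prod_ofFn, cond_eq_ite, prod_ite, prod_const]
  have hcard := card_filter_add_card_filter_not (s := univ) (f · = true)
  rw [card_univ, Fintype.card_fin] at hcard
  congr 2
  omega

theorem add_pow_eq_sum_wordProd [Semiring R] (a b : R) :
    (a + b) ^ n = ∑ f : Fin n → Bool, wordProd a b f := by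
  induction n with
  | zero => simp [wordProd]
  | succ n ih =>
    rw [pow_succ', ih, ← (Fin.consEquiv fun _ => Bool).sum_comp, Fintype.sum_prod_type,
      Fintype.sum_bool, add_mul, mul_sum, mul_sum]
    simp only [Fin.consEquiv, Equiv.coe_fn_mk, wordProd_cons, cond_true, cond_false]

def nonconstWords (n : ℕ) : Finset (Fin n → Bool) :=
  (univ.erase fun _ => true).erase fun _ => false

theorem mem_nonconstWords {f : Fin n → Bool} :
    f ∈ nonconstWords n ↔ (∃ i, f i = true) ∧ ∃ i, f i = false := by
  simp [nonconstWords, Function.ne_iff, and_comm]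

theorem card_nonconstWords_le : #(nonconstWords n) ≤ 2 ^ n :=
  (card_le_univ _).trans_eq (by simp)

theorem card_filter_eq_true_mem_Icc {f : Fin n → Bool} (hf : f ∈ nonconstWords n) :
    #{i | f i = true} ∈ Icc 1 (n - 1) := by
  obtain ⟨⟨i, hi⟩, ⟨j, hj⟩⟩ := mem_nonconstWords.1 hf
  have hpos : 0 < #{i | f i = true} := card_pos.2 ⟨i, by simp [hi]⟩
  have hlt : #{i | f i = true} < n := by
    simpa using card_lt_card (filter_ssubset.2 ⟨j, mem_univ j, by simp [hj]⟩)
  exact mem_Icc.2 ⟨hpos, by omega⟩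

theorem add_pow_sub_pow_sub_pow_eq_sum [Ring R] (a b : R) (hn : n ≠ 0) :
    (a + b) ^ n - a ^ n - b ^ n = ∑ f ∈ nonconstWords n, wordProd a b f := by
  have hne : (fun _ : Fin n => false) ≠ fun _ => true := fun h =>
    Bool.false_ne_true (congrFun h ⟨0, Nat.pos_of_ne_zero hn⟩)
  rw [add_pow_eq_sum_wordProd, ← add_sum_erase _ _ (mem_univ fun _ => true),
    ← add_sum_erase _ _ (mem_erase.2 ⟨hne, mem_univ _⟩)]
  simp only [wordProd_const_true, wordProd_const_false]
  abel

end Words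

namespace Matrix

variable {𝕜 n : Type*} [RCLike 𝕜] [Fintype n] [DecidableEq n]

theorem norm_entry_le_l2_opNorm (X : Matrix n n 𝕜) (i j : n) : ‖X i j‖ ≤ ‖X‖ := by
  have h := X.l2_opNorm_mulVec (EuclideanSpace.single j 1)
  rw [PiLp.norm_single, norm_one, mul_one] at h
  refine le_trans (le_of_eq ?_) ((PiLp.norm_apply_le _ i).trans h)
  simp

theorem norm_list_prod_le (l : List (Matrix n n 𝕜)) : ‖l.prod‖ ≤ (l.map norm).prod := by
  rcases isEmpty_or_nonempty n with hn | hn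
  · rw [Subsingleton.elim l.prod 0, norm_zero]
    exact List.prod_nonneg fun x hx => by
      obtain ⟨M, -, rfl⟩ := List.mem_map.1 hx
      exact norm_nonneg M
  · exact List.norm_prod_le l

theorem norm_trace_diagonal_mul_le (d : n → 𝕜) (X : Matrix n n 𝕜) :
    ‖(diagonal d * X).trace‖ ≤ #{i | d i ≠ 0} * (‖diagonal d‖ * ‖X‖) := by
  have hterm : ∀ i, ‖d i * X i i‖ ≤ ‖diagonal d‖ * ‖X‖ := fun i => by
    rw [norm_mul]
    gcongr
    · simpa using norm_entry_le_l2_opNorm (diagonal d) i i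
    · exact norm_entry_le_l2_opNorm X i i
  calc ‖(diagonal d * X).trace‖ = ‖∑ i ∈ univ.filter (d · ≠ 0), d i * X i i‖ := by
        rw [sum_filter_of_ne fun i _ h => left_ne_zero_of_mul h]
        simp [trace, diagonal_mul]
    _ ≤ _ := by
        refine (norm_sum_le _ _).trans ?_
        simpa using sum_le_card_nsmul _ _ _ fun i _ => hterm i

theorem IsHermitian.norm_trace_mul_le {C : Matrix n n 𝕜} (hC : C.IsHermitian)
    (M : Matrix n n 𝕜) : ‖(C * M).trace‖ ≤ C.rank * (‖C‖ * ‖M‖) := by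
  set u := hC.eigenvectorUnitary
  set D : Matrix n n 𝕜 := diagonal (RCLike.ofReal ∘ hC.eigenvalues)
  have hCD : C = u * D * (star u : unitary (Matrix n n 𝕜)) := by
    conv_lhs => rw [hC.spectral_theorem, Unitary.conjStarAlgAut_apply]
    rfl
  have htrace :
      (C * M).trace = (D * ((star u : unitary (Matrix n n 𝕜)) * M * u)).trace := by
    rw [hCD, Matrix.mul_assoc, Matrix.mul_assoc, trace_mul_comm]
    simp only [Matrix.mul_assoc]
  have hnormD : ‖D‖ = ‖C‖ := by
    rw [hCD, CStarRing.norm_mul_coe_unitary, CStarRing.norm_coe_unitary_mul]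
  have hnormX : ‖(star u : unitary (Matrix n n 𝕜)) * M * u‖ = ‖M‖ := by
    rw [CStarRing.norm_mul_coe_unitary, CStarRing.norm_coe_unitary_mul]
  have hrank : C.rank = #{i | (RCLike.ofReal (hC.eigenvalues i) : 𝕜) ≠ 0} := by
    simp [hC.rank_eq_card_non_zero_eigs, Fintype.card_subtype]
  rw [htrace, hrank, ← hnormD, ← hnormX]
  exact norm_trace_diagonal_mul_le _ _

theorem IsHermitian.norm_trace_list_prod_le_of_mem {C : Matrix n n 𝕜} (hC : C.IsHermitian)
    {L : List (Matrix n n 𝕜)} (hCL : C ∈ L) : ‖L.prod.trace‖ ≤ C.rank * (L.map norm).prod := by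
  obtain ⟨s, t, rfl⟩ := List.append_of_mem hCL
  have hcycle : (s ++ C :: t).prod.trace = (C * (t.prod * s.prod)).trace := by
    rw [List.prod_append, List.prod_cons, trace_mul_comm, Matrix.mul_assoc]
  have hrest : ‖t.prod * s.prod‖ ≤ (t.map norm).prod * (s.map norm).prod :=
    (norm_mul_le _ _).trans <| mul_le_mul (norm_list_prod_le t) (norm_list_prod_le s)
      (norm_nonneg _) (List.prod_nonneg fun x hx => by
        obtain ⟨M, -, rfl⟩ := List.mem_map.1 hx
        exact norm_nonneg M)
  calc ‖(s ++ C :: t).prod.trace‖ ≤ C.rank * (‖C‖ * ‖t.prod * s.prod‖) :=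
        hcycle ▸ hC.norm_trace_mul_le _
    _ ≤ C.rank * (‖C‖ * ((t.map norm).prod * (s.map norm).prod)) := by gcongr
    _ = C.rank * ((s ++ C :: t).map norm).prod := by
        simp only [List.map_append, List.map_cons, List.prod_append, List.prod_cons]
        ring

theorem IsHermitian.norm_trace_wordProd_le {C : Matrix n n 𝕜} (hC : C.IsHermitian)
    (A : Matrix n n 𝕜) {p : ℕ} {f : Fin p → Bool} (hf : ∃ i, f i = false) :
    ‖(wordProd A C f).trace‖ ≤
      C.rank * (‖A‖ ^ #{i | f i = true} * ‖C‖ ^ (p - #{i | f i = true})) := by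
  obtain ⟨i, hi⟩ := hf
  have hCL : C ∈ List.ofFn fun i => bif f i then A else C :=
    List.mem_ofFn.2 ⟨i, by simp [hi]⟩
  have hnorms :
      ((List.ofFn fun i => bif f i then A else C).map norm).prod = wordProd ‖A‖ ‖C‖ f := by
    simp only [wordProd, List.map_ofFn, Function.comp_def, Bool.apply_cond]
  rw [← wordProd_eq_pow_mul_pow, ← hnorms]
  exact hC.norm_trace_list_prod_le_of_mem hCL

end Matrix

theorem trace_power_rank_perturbation
    {N r p : ℕ} (hp : 2 ≤ p)
    (A C : Matrix (Fin N) (Fin N) ℂ)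
    (hC : C.IsHermitian)
    (hrank : C.rank ≤ r) :
    ‖((A + C) ^ p).trace - (A ^ p).trace - (C ^ p).trace‖ ≤
      2 ^ p * r *
        (Finset.Icc 1 (p - 1)).sup'
          ⟨1, Finset.mem_Icc.mpr ⟨le_refl 1, by omega⟩⟩
          (fun k => opNorm A ^ k * opNorm C ^ (p - k)) := by
  simp only [opNorm_eq_norm]
  set S := (Icc 1 (p - 1)).sup' ⟨1, mem_Icc.2 ⟨le_refl 1, by omega⟩⟩
    fun k => ‖A‖ ^ k * ‖C‖ ^ (p - k)
  have hS : 0 ≤ S := (by positivity : (0 : ℝ) ≤ ‖A‖ ^ 1 * ‖C‖ ^ (p - 1)).trans <|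
    le_sup' (fun k => ‖A‖ ^ k * ‖C‖ ^ (p - k)) (mem_Icc.2 ⟨le_refl 1, by omega⟩)
  have hword : ∀ f ∈ nonconstWords p, ‖(wordProd A C f).trace‖ ≤ r * S := fun f hf =>
    calc ‖(wordProd A C f).trace‖
        ≤ C.rank * (‖A‖ ^ #{i | f i = true} * ‖C‖ ^ (p - #{i | f i = true})) :=
          hC.norm_trace_wordProd_le A (mem_nonconstWords.1 hf).2
      _ ≤ r * S := by
          gcongr
          exact le_sup' (fun k => ‖A‖ ^ k * ‖C‖ ^ (p - k)) (card_filter_eq_true_mem_Icc hf)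
  rw [← trace_sub, ← trace_sub, add_pow_sub_pow_sub_pow_eq_sum _ _ (by omega), trace_sum]
  calc _ ≤ ∑ _ ∈ nonconstWords p, r * S := norm_sum_le_of_le _ hword
    _ ≤ 2 ^ p * r * S := by
        rw [sum_const, nsmul_eq_mul, mul_assoc]
        gcongr
        exact_mod_cast card_nonconstWords_le
end

section
/- Let p ≥ 3 be an integer and let Y, H be N×N Hermitian (or real symmetric) matrices. Then |tr((Y+H)^p) - tr(Y^p) - tr(H^p)| ≤ 2^p · max_{1≤k≤p-1} (tr|Y|^{p+1})^{k/(p+1)} · (tr H²)^{(p-k)/2}. -/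
/-!
Conjugating by the eigenvector unitary of `Y` turns `Y` into the diagonal matrix `D` of its
eigenvalues `λᵢ` and `H` into a matrix `K` with Frobenius norm `‖K‖₂ = (tr H²)^(1/2)`, and leaves
all traces unchanged. Of the `2^p` words in the expansion of `(D + K)^p`, the two pure ones give
`tr D^p` and `tr K^p`. A mixed word with `k` letters `D` is rotated cyclically into `K W`, and
`|tr (K W)| ≤ ‖K‖₂ ‖W‖₂`. Multiplying by `D` on either side scales `‖·‖₂` by at most
`max |λᵢ| ≤ a := (∑ |λᵢ|^(p+1))^(1/(p+1))`, and multiplying by `K` by at most `‖K‖₂`, so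
`‖W‖₂ ≤ a^k ‖K‖₂^(p-1-k)` as soon as `W` contains a `K`. The one remaining word, `W = D^(p-1)`,
satisfies `‖W‖₂² = ∑ |λᵢ|^(2(p-1)) ≤ a^(2(p-1))` because `2(p-1) ≥ p+1`, which is where `p ≥ 3`
enters.
-/

theorem add_pow_eq_sum_prod_map_cond {R : Type*} [Semiring R] (x y : R) (n : ℕ) :
    (x + y) ^ n = ∑ w : Fin n → Bool, ((List.ofFn w).map (cond · x y)).prod := by
  induction n with
  | zero => simp
  | succ n ih =>
    rw [pow_succ', ih, Finset.mul_sum, ← (Fin.consEquiv fun _ => Bool).sum_comp,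
      Fintype.sum_prod_type, Fintype.sum_bool]
    simp [List.ofFn_succ, add_mul, Finset.sum_add_distrib]

theorem add_pow_sub_pow_sub_pow_eq_sum_s1 {R : Type*} [Ring R] (x y : R) {n : ℕ} (hn : n ≠ 0) :
    (x + y) ^ n - x ^ n - y ^ n =
      ∑ w ∈ (Finset.univ \ {fun _ => true, fun _ => false} : Finset (Fin n → Bool)),
      ((List.ofFn w).map (cond · x y)).prod := by
  have hne : (fun _ : Fin n => true) ≠ fun _ => false := fun h =>
    Bool.noConfusion (congrFun h ⟨0, Nat.pos_of_ne_zero hn⟩)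
  rw [Finset.sum_sdiff_eq_sub (Finset.subset_univ _), Finset.sum_pair hne,
    ← add_pow_eq_sum_prod_map_cond]
  simp [List.ofFn_const, sub_sub]

theorem List.prod_map_cond {M : Type*} [CommMonoid M] (a b : M) (l : List Bool) :
    (l.map (cond · a b)).prod = a ^ l.count true * b ^ l.count false := by
  induction l with
  | nil => simp
  | cons x l ih => cases x <;> simp [ih, pow_succ, mul_comm, mul_left_comm, mul_assoc]

section ProdMapNorm

variable {R ι : Type*} [Monoid R] [Norm R] {X : ι → R} {c : ι → ℝ}

theorem norm_mul_prod_map_le (hc : ∀ i, 0 ≤ c i) (hX : ∀ i M, ‖M * X i‖ ≤ ‖M‖ * c i)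
    (l : List ι) (M : R) : ‖M * (l.map X).prod‖ ≤ ‖M‖ * (l.map c).prod := by
  induction l generalizing M with
  | nil => simp
  | cons i l ih =>
    calc ‖M * ((i :: l).map X).prod‖ = ‖M * X i * (l.map X).prod‖ := by simp [mul_assoc]
    _ ≤ ‖M * X i‖ * (l.map c).prod := ih _
    _ ≤ ‖M‖ * c i * (l.map c).prod := by gcongr; exacts [List.prod_nonneg (by simp [hc]), hX i M]
    _ = ‖M‖ * ((i :: l).map c).prod := by simp [mul_assoc]

theorem norm_prod_map_mul_le (hc : ∀ i, 0 ≤ c i) (hX : ∀ i M, ‖X i * M‖ ≤ c i * ‖M‖)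
    (l : List ι) (M : R) : ‖(l.map X).prod * M‖ ≤ (l.map c).prod * ‖M‖ := by
  induction l generalizing M with
  | nil => simp
  | cons i l ih =>
    calc ‖((i :: l).map X).prod * M‖ = ‖X i * ((l.map X).prod * M)‖ := by simp [mul_assoc]
    _ ≤ c i * ‖(l.map X).prod * M‖ := hX i _
    _ ≤ c i * ((l.map c).prod * ‖M‖) := by gcongr; exacts [hc i, ih M]
    _ = ((i :: l).map c).prod * ‖M‖ := by simp [mul_assoc]

theorem norm_prod_map_le_of_mem (hc : ∀ i, 0 ≤ c i) (hXl : ∀ i M, ‖X i * M‖ ≤ c i * ‖M‖)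
    (hXr : ∀ i M, ‖M * X i‖ ≤ ‖M‖ * c i) {l : List ι} {i : ι} (hi : i ∈ l)
    (hXi : ‖X i‖ ≤ c i) : ‖(l.map X).prod‖ ≤ (l.map c).prod := by
  obtain ⟨s, t, rfl⟩ := List.append_of_mem hi
  calc ‖((s ++ i :: t).map X).prod‖ = ‖(s.map X).prod * X i * (t.map X).prod‖ := by
        simp [mul_assoc]
  _ ≤ ‖(s.map X).prod * X i‖ * (t.map c).prod := norm_mul_prod_map_le hc hXr t _
  _ ≤ (s.map c).prod * c i * (t.map c).prod := by
        gcongr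
        · exact List.prod_nonneg (by simp [hc])
        · exact (norm_prod_map_mul_le hc hXl s _).trans
            (by gcongr; exact List.prod_nonneg (by simp [hc]))
  _ = ((s ++ i :: t).map c).prod := by simp [mul_assoc]

end ProdMapNorm

theorem norm_le_sum_norm_pow_rpow_inv {ι E : Type*} [Fintype ι] [SeminormedAddCommGroup E]
    (x : ι → E) {q : ℕ} (hq : q ≠ 0) (i : ι) :
    ‖x i‖ ≤ (∑ j, ‖x j‖ ^ q) ^ (q⁻¹ : ℝ) :=
  calc ‖x i‖ = (‖x i‖ ^ q) ^ (q⁻¹ : ℝ) := (Real.pow_rpow_inv_natCast (norm_nonneg _) hq).symm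
  _ ≤ _ := by
    gcongr
    exact Finset.single_le_sum (f := fun j => ‖x j‖ ^ q) (fun j _ => by positivity)
      (Finset.mem_univ i)

theorem Finset.sum_pow_le_pow_sub_mul_sum_pow {ι : Type*} {s : Finset ι} {x : ι → ℝ} {a : ℝ}
    (hx : ∀ i ∈ s, 0 ≤ x i) (hxa : ∀ i ∈ s, x i ≤ a) {q r : ℕ} (hqr : q ≤ r) :
    ∑ i ∈ s, x i ^ r ≤ a ^ (r - q) * ∑ i ∈ s, x i ^ q := by
  rw [Finset.mul_sum]
  refine Finset.sum_le_sum fun i hi => ?_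
  rw [← Nat.sub_add_cancel hqr, pow_add, Nat.add_sub_cancel]
  exact mul_le_mul_of_nonneg_right (pow_le_pow_left₀ (hx i hi) (hxa i hi) _)
    (pow_nonneg (hx i hi) _)

open scoped Matrix.Norms.Frobenius

namespace Matrix

variable {R 𝕜 m n : Type*} [Fintype m] [Fintype n]

theorem frobenius_norm_sq [SeminormedAddCommGroup R] (A : Matrix m n R) :
    ‖A‖ ^ 2 = ∑ i, ∑ j, ‖A i j‖ ^ 2 := by
  change ‖WithLp.toLp 2 fun i => WithLp.toLp 2 fun j => A i j‖ ^ 2 = _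
  simp [PiLp.norm_sq_eq_of_L2]

theorem frobenius_norm_diagonal_mul_le [SeminormedRing R] [DecidableEq m] (d : m → R)
    (A : Matrix m n R) : ‖diagonal d * A‖ ≤ ‖d‖ * ‖A‖ := by
  refine le_of_pow_le_pow_left₀ two_ne_zero (by positivity) ?_
  rw [mul_pow, frobenius_norm_sq, frobenius_norm_sq, Finset.mul_sum]
  refine Finset.sum_le_sum fun i _ => ?_
  rw [Finset.mul_sum]
  refine Finset.sum_le_sum fun j _ => ?_
  rw [diagonal_mul, ← mul_pow]
  exact pow_le_pow_left₀ (norm_nonneg _)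
    ((norm_mul_le _ _).trans (by gcongr; exact norm_le_pi_norm d i)) 2

theorem frobenius_norm_mul_diagonal_le [SeminormedRing R] [DecidableEq n] (A : Matrix m n R)
    (d : n → R) : ‖A * diagonal d‖ ≤ ‖A‖ * ‖d‖ := by
  refine le_of_pow_le_pow_left₀ two_ne_zero (by positivity) ?_
  rw [mul_pow, frobenius_norm_sq, frobenius_norm_sq, Finset.sum_mul]
  refine Finset.sum_le_sum fun i _ => ?_
  rw [Finset.sum_mul]
  refine Finset.sum_le_sum fun j _ => ?_
  rw [mul_diagonal, ← mul_pow]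
  exact pow_le_pow_left₀ (norm_nonneg _)
    ((norm_mul_le _ _).trans (by gcongr; exact norm_le_pi_norm d j)) 2

theorem norm_trace_mul_le [SeminormedRing R] (A : Matrix m n R) (B : Matrix n m R) :
    ‖(A * B).trace‖ ≤ ‖A‖ * ‖B‖ := by
  have hCS := Finset.sum_mul_sq_le_sq_mul_sq (Finset.univ : Finset (m × n))
    (fun q => ‖A q.1 q.2‖) (fun q => ‖B q.2 q.1‖)
  simp only [Fintype.sum_prod_type] at hCS
  refine le_of_pow_le_pow_left₀ two_ne_zero (by positivity) ?_
  calc ‖(A * B).trace‖ ^ 2 ≤ (∑ i, ∑ j, ‖A i j‖ * ‖B j i‖) ^ 2 := by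
        gcongr
        refine (norm_sum_le _ _).trans (Finset.sum_le_sum fun i _ => ?_)
        exact (norm_sum_le _ _).trans (Finset.sum_le_sum fun j _ => norm_mul_le _ _)
  _ ≤ (∑ i, ∑ j, ‖A i j‖ ^ 2) * ∑ i, ∑ j, ‖B j i‖ ^ 2 := hCS
  _ = (‖A‖ * ‖Bᵀ‖) ^ 2 := by rw [mul_pow, frobenius_norm_sq, frobenius_norm_sq]; rfl
  _ = (‖A‖ * ‖B‖) ^ 2 := by rw [frobenius_norm_transpose]

theorem frobenius_norm_sq_eq_re_trace [RCLike 𝕜] (A : Matrix m n 𝕜) :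
    ‖A‖ ^ 2 = RCLike.re (Aᴴ * A).trace := by
  simp [frobenius_norm_sq, trace, mul_apply, RCLike.conj_mul, Finset.sum_comm (γ := m)]

theorem trace_conjStarAlgAut [RCLike 𝕜] [DecidableEq n] (u : unitaryGroup n 𝕜)
    (A : Matrix n n 𝕜) : (Unitary.conjStarAlgAut 𝕜 _ u A).trace = A.trace := by
  rw [Unitary.conjStarAlgAut_apply, trace_mul_cycle, Unitary.coe_star_mul_self, one_mul]

theorem frobenius_norm_conjStarAlgAut [RCLike 𝕜] [DecidableEq n] (u : unitaryGroup n 𝕜)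
    (A : Matrix n n 𝕜) : ‖Unitary.conjStarAlgAut 𝕜 _ u A‖ = ‖A‖ := by
  rw [← sq_eq_sq₀ (norm_nonneg _) (norm_nonneg _), frobenius_norm_sq_eq_re_trace,
    frobenius_norm_sq_eq_re_trace, ← star_eq_conjTranspose, ← map_star, ← map_mul,
    trace_conjStarAlgAut, star_eq_conjTranspose]

theorem IsHermitian.frobenius_norm_eq_sqrt [RCLike 𝕜] [DecidableEq n] {A : Matrix n n 𝕜}
    (hA : A.IsHermitian) : ‖A‖ = √(∑ i, hA.eigenvalues i ^ 2) := by
  rw [← frobenius_norm_conjStarAlgAut (star hA.eigenvectorUnitary),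
    hA.conjStarAlgAut_star_eigenvectorUnitary, frobenius_norm_diagonal, EuclideanSpace.norm_eq]
  simp

theorem frobenius_norm_diagonal_pow_le [RCLike 𝕜] [DecidableEq n] (d : n → 𝕜) {q r : ℕ}
    (hq : q ≠ 0) (hqr : q ≤ 2 * r) : ‖diagonal d ^ r‖ ≤ (∑ i, ‖d i‖ ^ q) ^ ((r : ℝ) / q) := by
  set a := (∑ i, ‖d i‖ ^ q) ^ (q⁻¹ : ℝ)
  have ha : 0 ≤ a := by positivity
  have haq : a ^ q = ∑ i, ‖d i‖ ^ q := Real.rpow_inv_natCast_pow (by positivity) hq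
  have hsum : ∑ i, ‖d i‖ ^ (2 * r) ≤ (a ^ r) ^ 2 := by
    calc ∑ i, ‖d i‖ ^ (2 * r) ≤ a ^ (2 * r - q) * ∑ i, ‖d i‖ ^ q :=
          Finset.sum_pow_le_pow_sub_mul_sum_pow (fun i _ => norm_nonneg _)
            (fun i _ => norm_le_sum_norm_pow_rpow_inv d hq i) hqr
    _ = (a ^ r) ^ 2 := by rw [← haq, ← pow_add, ← pow_mul, Nat.sub_add_cancel hqr, mul_comm]
  calc ‖diagonal d ^ r‖ ≤ a ^ r := by
        rw [diagonal_pow, frobenius_norm_diagonal, EuclideanSpace.norm_eq, Real.sqrt_le_iff]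
        refine ⟨by positivity, le_of_eq_of_le ?_ hsum⟩
        simp [pow_mul']
  _ = (∑ i, ‖d i‖ ^ q) ^ ((r : ℝ) / q) := by
        rw [← Real.rpow_natCast, ← Real.rpow_mul (by positivity), inv_mul_eq_div]

section WordTrace

variable [RCLike 𝕜] [DecidableEq n] {D K : Matrix n n 𝕜} {α β : ℝ}

theorem norm_trace_prod_map_cond_le (hα : 0 ≤ α) (hβ : 0 ≤ β)
    (hDl : ∀ M, ‖D * M‖ ≤ α * ‖M‖) (hDr : ∀ M, ‖M * D‖ ≤ ‖M‖ * α) (hK : ‖K‖ ≤ β)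
    {l : List Bool} (hl : false ∈ l) (hDpow : ‖D ^ (l.length - 1)‖ ≤ α ^ (l.length - 1)) :
    ‖((l.map (cond · D K)).prod).trace‖ ≤ (l.map (cond · α β)).prod := by
  obtain ⟨s, t, rfl⟩ := List.append_of_mem hl
  set u := t ++ s with hu
  have hc : ∀ b, 0 ≤ cond b α β := by simp [hα, hβ]
  have hXl : ∀ b M, ‖cond b D K * M‖ ≤ cond b α β * ‖M‖ := by
    rintro (_ | _) M
    exacts [(frobenius_norm_mul K M).trans (by gcongr; exact hK), hDl M]
  have hXr : ∀ b M, ‖M * cond b D K‖ ≤ ‖M‖ * cond b α β := by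
    rintro (_ | _) M
    exacts [(frobenius_norm_mul M K).trans (by gcongr; exact hK), hDr M]
  have hword : ‖(u.map (cond · D K)).prod‖ ≤ (u.map (cond · α β)).prod := by
    by_cases hf : false ∈ u
    · exact norm_prod_map_le_of_mem hc hXl hXr hf hK
    · have hlen : u.length = (s ++ false :: t).length - 1 := by simp [hu]; omega
      rw [List.eq_replicate_of_mem (l := u) (a := true) (by simpa using hf)]
      simpa [hlen] using hDpow
  have hperm : (s ++ false :: t).Perm (false :: u) :=
    List.perm_middle.trans (List.perm_append_comm.cons false)
  calc ‖((s ++ false :: t).map (cond · D K)).prod.trace‖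
      = ‖(K * (u.map (cond · D K)).prod).trace‖ := by
        simp only [List.map_append, List.prod_append, List.map_cons, List.prod_cons, hu]
        rw [trace_mul_comm, mul_assoc]
        rfl
  _ ≤ ‖K‖ * ‖(u.map (cond · D K)).prod‖ := norm_trace_mul_le _ _
  _ ≤ β * (u.map (cond · α β)).prod := by gcongr
  _ = ((s ++ false :: t).map (cond · α β)).prod := by
        rw [(hperm.map _).prod_eq]
        rfl

theorem norm_trace_add_pow_sub_pow_sub_pow_le (hα : 0 ≤ α) (hβ : 0 ≤ β)
    (hDl : ∀ M, ‖D * M‖ ≤ α * ‖M‖) (hDr : ∀ M, ‖M * D‖ ≤ ‖M‖ * α) (hK : ‖K‖ ≤ β)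
    {p : ℕ} (hp : p ≠ 0) (hDpow : ‖D ^ (p - 1)‖ ≤ α ^ (p - 1)) {B : ℝ}
    (hB : ∀ k ∈ Finset.Icc 1 (p - 1), α ^ k * β ^ (p - k) ≤ B) :
    ‖((D + K) ^ p).trace - (D ^ p).trace - (K ^ p).trace‖ ≤ (2 ^ p - 2) * B := by
  set mixed : Finset (Fin p → Bool) := Finset.univ \ {fun _ => true, fun _ => false}
  have hterm : ∀ w ∈ mixed, ‖((List.ofFn w).map (cond · D K)).prod.trace‖ ≤ B := by
    intro w hw
    have hmem : true ∈ List.ofFn w ∧ false ∈ List.ofFn w := by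
      simpa [mixed, List.mem_ofFn, funext_iff, and_comm] using hw
    have hcount : (List.ofFn w).count true + (List.ofFn w).count false = p :=
      (List.count_true_add_count_false _).trans List.length_ofFn
    have htrue := List.count_pos_iff.mpr hmem.1
    have hfalse := List.count_pos_iff.mpr hmem.2
    calc ‖((List.ofFn w).map (cond · D K)).prod.trace‖
        ≤ ((List.ofFn w).map (cond · α β)).prod :=
          norm_trace_prod_map_cond_le hα hβ hDl hDr hK hmem.2 (by simpa using hDpow)
    _ = α ^ (List.ofFn w).count true * β ^ (p - (List.ofFn w).count true) := by
          rw [List.prod_map_cond]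
          congr 2
          omega
    _ ≤ B := hB _ (Finset.mem_Icc.mpr ⟨htrue, by omega⟩)
  have hcard : (mixed.card : ℝ) = 2 ^ p - 2 := by
    have hne : (fun _ : Fin p => true) ≠ fun _ => false := fun h =>
      Bool.noConfusion (congrFun h ⟨0, Nat.pos_of_ne_zero hp⟩)
    have h2 : 2 ≤ 2 ^ p := Nat.le_self_pow hp 2
    simp [mixed, Finset.card_univ_sdiff, Finset.card_pair hne, Nat.cast_sub h2]
  calc ‖((D + K) ^ p).trace - (D ^ p).trace - (K ^ p).trace‖
      = ‖∑ w ∈ mixed, ((List.ofFn w).map (cond · D K)).prod.trace‖ := by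
        rw [← trace_sub, ← trace_sub, add_pow_sub_pow_sub_pow_eq_sum_s1 D K hp, trace_sum]
  _ ≤ ∑ w ∈ mixed, B := (norm_sum_le _ _).trans (Finset.sum_le_sum hterm)
  _ = (2 ^ p - 2) * B := by rw [Finset.sum_const, nsmul_eq_mul, hcard]

theorem norm_trace_diagonal_add_pow_sub_pow_sub_pow_le (d : n → 𝕜) (K : Matrix n n 𝕜) {p : ℕ}
    (hp : 3 ≤ p) {B : ℝ} (hB : ∀ k ∈ Finset.Icc 1 (p - 1),
      (∑ i, ‖d i‖ ^ (p + 1)) ^ ((k : ℝ) / (p + 1)) * ‖K‖ ^ (p - k) ≤ B) :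
    ‖((diagonal d + K) ^ p).trace - (diagonal d ^ p).trace - (K ^ p).trace‖ ≤ (2 ^ p - 2) * B := by
  set S := ∑ i, ‖d i‖ ^ (p + 1)
  have hS : 0 ≤ S := Finset.sum_nonneg fun _ _ => by positivity
  have hpow : ∀ k : ℕ, (S ^ ((p : ℝ) + 1)⁻¹) ^ k = S ^ ((k : ℝ) / (p + 1)) := fun k => by
    rw [← Real.rpow_mul_natCast hS, inv_mul_eq_div]
  have hd : ‖d‖ ≤ S ^ ((p : ℝ) + 1)⁻¹ := (pi_norm_le_iff_of_nonneg (by positivity)).mpr fun i =>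
    by exact_mod_cast norm_le_sum_norm_pow_rpow_inv d (q := p + 1) (by omega) i
  have hDpow : ‖diagonal d ^ (p - 1)‖ ≤ (S ^ ((p : ℝ) + 1)⁻¹) ^ (p - 1) := by
    rw [hpow]
    exact_mod_cast frobenius_norm_diagonal_pow_le d (q := p + 1) (r := p - 1) (by omega) (by omega)
  refine norm_trace_add_pow_sub_pow_sub_pow_le (by positivity) (norm_nonneg K)
    (fun M => (frobenius_norm_diagonal_mul_le d M).trans (by gcongr))
    (fun M => (frobenius_norm_mul_diagonal_le M d).trans (by gcongr)) le_rfl (by omega) hDpow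
    fun k hk => by rw [hpow]; exact hB k hk

end WordTrace

end Matrix

/-- For Hermitian `Y`, `tr |Y|^q = ∑ i, |λ_i(Y)|^q` where the `λ_i` are the eigenvalues;
we state the bound in terms of the eigenvalues. -/
theorem trace_power_add_sub_bound
    {N p : ℕ} (hp : 3 ≤ p)
    (Y H : Matrix (Fin N) (Fin N) ℂ)
    (hY : Y.IsHermitian) (hH : H.IsHermitian) :
    ‖((Y + H) ^ p).trace - (Y ^ p).trace - (H ^ p).trace‖ ≤
      2 ^ p *
        (Finset.Icc 1 (p - 1)).sup'
          ⟨1, Finset.mem_Icc.mpr ⟨le_refl 1, by omega⟩⟩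
          (fun k =>
            (∑ i, |hY.eigenvalues i| ^ (p + 1)) ^ ((k : ℝ) / (p + 1)) *
            (∑ i, (hH.eigenvalues i) ^ 2) ^ (((p : ℝ) - k) / 2)) := by
  set φ := Unitary.conjStarAlgAut ℂ (Matrix (Fin N) (Fin N) ℂ) (star hY.eigenvectorUnitary)
  set T := ∑ i, hH.eigenvalues i ^ 2
  set B := (Finset.Icc 1 (p - 1)).sup' ⟨1, Finset.mem_Icc.mpr ⟨le_refl 1, by omega⟩⟩
    fun k : ℕ => (∑ i, |hY.eigenvalues i| ^ (p + 1)) ^ ((k : ℝ) / (p + 1)) *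
      T ^ (((p : ℝ) - k) / 2)
  have hφ : ((Y + H) ^ p).trace - (Y ^ p).trace - (H ^ p).trace =
      ((Matrix.diagonal (RCLike.ofReal ∘ hY.eigenvalues) + φ H) ^ p).trace -
        (Matrix.diagonal (RCLike.ofReal ∘ hY.eigenvalues) ^ p).trace - (φ H ^ p).trace := by
    rw [← hY.conjStarAlgAut_star_eigenvectorUnitary, ← map_add, ← map_pow, ← map_pow, ← map_pow,
      Matrix.trace_conjStarAlgAut, Matrix.trace_conjStarAlgAut, Matrix.trace_conjStarAlgAut]
  have hT : 0 ≤ T := Finset.sum_nonneg fun _ _ => by positivity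
  have hK : ‖φ H‖ = T ^ (1 / 2 : ℝ) := by
    rw [Matrix.frobenius_norm_conjStarAlgAut, hH.frobenius_norm_eq_sqrt, Real.sqrt_eq_rpow]
  have hB : ∀ k ∈ Finset.Icc 1 (p - 1),
      (∑ i, ‖(RCLike.ofReal ∘ hY.eigenvalues : Fin N → ℂ) i‖ ^ (p + 1)) ^ ((k : ℝ) / (p + 1)) *
        ‖φ H‖ ^ (p - k) ≤ B := fun k hk => by
    have hkp : k ≤ p := by simp at hk; omega
    refine le_of_eq_of_le ?_ (Finset.le_sup' _ hk)
    rw [hK, ← Real.rpow_mul_natCast hT, Nat.cast_sub hkp, one_div_mul_eq_div]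
    simp only [Function.comp_apply, RCLike.norm_ofReal]
  have hB0 : 0 ≤ B := le_trans (by positivity) (hB 1 (by simp; omega))
  rw [hφ]
  refine (Matrix.norm_trace_diagonal_add_pow_sub_pow_sub_pow_le _ _ hp hB).trans ?_
  linarith
end

section
/- For any real number α ≥ 2 and all real x, y: (1/2)|x|^α + (1/2)|y|^α ≥ |(x+y)/2|^α + |(x-y)/2|^α. -/
/-! With `p = α / 2 ≥ 1`, write `|t| ^ α = (t ^ 2) ^ p`. By the parallelogram law the squares
`((x + y) / 2) ^ 2` and `((x - y) / 2) ^ 2` add up to the mean of `x ^ 2` and `y ^ 2`.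
Superadditivity of `t ↦ t ^ p` on `[0, ∞)` bounds the left-hand side by the `p`-th power of that mean,
and convexity of `t ↦ t ^ p` bounds this by the mean of `(x ^ 2) ^ p` and `(y ^ 2) ^ p`. -/

open Real

lemma sq_rpow_div_two (x p : ℝ) : (x ^ 2) ^ (p / 2) = |x| ^ p := by
  rw [rpow_div_two_eq_sqrt p (sq_nonneg x), sqrt_sq_eq_abs]

lemma rpow_midpoint_le {p a b : ℝ} (hp : 1 ≤ p) (ha : 0 ≤ a) (hb : 0 ≤ b) :
    ((1 / 2) * a + (1 / 2) * b) ^ p ≤ (1 / 2) * a ^ p + (1 / 2) * b ^ p :=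
  (convexOn_rpow hp).2 (Set.mem_Ici.2 ha) (Set.mem_Ici.2 hb) (by norm_num) (by norm_num)
    (by norm_num)

theorem rpow_midpoint_convexity (α : ℝ) (hα : 2 ≤ α) (x y : ℝ) :
    |(x + y) / 2| ^ α + |(x - y) / 2| ^ α ≤ (1 / 2) * |x| ^ α + (1 / 2) * |y| ^ α := by
  have hp : 1 ≤ α / 2 := by linarith
  simp only [← sq_rpow_div_two]
  calc (((x + y) / 2) ^ 2) ^ (α / 2) + (((x - y) / 2) ^ 2) ^ (α / 2)
      ≤ (((x + y) / 2) ^ 2 + ((x - y) / 2) ^ 2) ^ (α / 2) :=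
        add_rpow_le_rpow_add (sq_nonneg _) (sq_nonneg _) hp
    _ = ((1 / 2) * x ^ 2 + (1 / 2) * y ^ 2) ^ (α / 2) := by ring_nf
    _ ≤ (1 / 2) * (x ^ 2) ^ (α / 2) + (1 / 2) * (y ^ 2) ^ (α / 2) :=
        rpow_midpoint_le hp (sq_nonneg x) (sq_nonneg y)
end

section
/- Let α ≥ 2, N ≥ 1, f: ℝ → ℝ a 1-Lipschitz function, and 1 ≤ l ≤ m ≤ N. Define g(λ) = (1/N)·Σ_{i=l}^m f(λ̄_i), where λ̄₁ ≤ ... ≤ λ̄_N is the nondecreasing rearrangement of the coordinates of λ ∈ ℝ^N. Then g is N^{-1/α}-Lipschitz with respect to the norm ‖x‖_α = (Σ|x_i|^α)^{1/α}, i.e. |g(λ) - g(μ)| ≤ N^{-1/α}‖λ - μ‖_α for all λ, μ ∈ ℝ^N. -/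
/-!
Since `f` is 1-Lipschitz, `|g(λ) - g(μ)| ≤ N⁻¹ ∑ᵢ |λ̄ᵢ - μ̄ᵢ|`. Cauchy–Schwarz bounds this sum by
`N^{1/2} ‖λ̄ - μ̄‖₂`, sorting both vectors can only decrease the `ℓ²` distance (Hardy–Littlewood–Pólya),
and for `α ≥ 2` the power-mean inequality gives `‖λ - μ‖₂ ≤ N^{1/2 - 1/α} ‖λ - μ‖_α`.
-/

open Finset

/-- The nondecreasing rearrangement of the coordinates of `lam`. -/
noncomputable def sortedCoords {N : ℕ} (lam : Fin N → ℝ) : Fin N → ℝ :=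
  lam ∘ Tuple.sort lam

lemma sortedCoords_monotone {N : ℕ} (lam : Fin N → ℝ) : Monotone (sortedCoords lam) :=
  Tuple.monotone_sort lam

lemma sum_mul_le_sum_sortedCoords_mul {N : ℕ} (lam mu : Fin N → ℝ) :
    ∑ i, lam i * mu i ≤ ∑ i, sortedCoords lam i * sortedCoords mu i := by
  let σ := Tuple.sort lam
  let τ := Tuple.sort mu
  calc ∑ i, lam i * mu i = ∑ i, lam (σ i) * mu (σ i) := (Equiv.sum_comp σ _).symm
    _ = ∑ i, sortedCoords lam i * sortedCoords mu ((σ.trans τ.symm) i) := by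
        simp [sortedCoords, σ, τ]
    _ ≤ _ := ((sortedCoords_monotone lam).monovary
        (sortedCoords_monotone mu)).sum_mul_comp_perm_le_sum_mul

lemma sum_sortedCoords_sq {N : ℕ} (lam : Fin N → ℝ) :
    ∑ i, sortedCoords lam i ^ 2 = ∑ i, lam i ^ 2 :=
  Equiv.sum_comp (Tuple.sort lam) (fun j => lam j ^ 2)

lemma sum_sortedCoords_sub_sq_le {N : ℕ} (lam mu : Fin N → ℝ) :
    ∑ i, (sortedCoords lam i - sortedCoords mu i) ^ 2 ≤ ∑ i, (lam i - mu i) ^ 2 := by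
  have expand (a b : Fin N → ℝ) :
      ∑ i, (a i - b i) ^ 2 = ∑ i, a i ^ 2 + ∑ i, b i ^ 2 - 2 * ∑ i, a i * b i := by
    simp only [sub_sq, sum_sub_distrib, sum_add_distrib, mul_sum, mul_assoc]; ring
  rw [expand, expand, sum_sortedCoords_sq, sum_sortedCoords_sq]
  linarith [sum_mul_le_sum_sortedCoords_mul lam mu]

lemma abs_sum_comp_sub_sum_comp_le {ι : Type*} [Fintype ι] {f : ℝ → ℝ} (hf : LipschitzWith 1 f)
    (s : Finset ι) (a b : ι → ℝ) :
    |∑ i ∈ s, f (a i) - ∑ i ∈ s, f (b i)| ≤ ∑ i, |a i - b i| :=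
  calc |∑ i ∈ s, f (a i) - ∑ i ∈ s, f (b i)|
      ≤ ∑ i ∈ s, |f (a i) - f (b i)| := by
        rw [← sum_sub_distrib]; exact abs_sum_le_sum_abs _ _
    _ ≤ ∑ i ∈ s, |a i - b i| := sum_le_sum fun i _ => by
        simpa [Real.dist_eq] using hf.dist_le_mul (a i) (b i)
    _ ≤ ∑ i, |a i - b i| := sum_le_univ_sum_of_nonneg fun i => abs_nonneg _

lemma sum_abs_sortedCoords_sub_rpow_le {N : ℕ} {α : ℝ} (hα : 2 ≤ α) (lam mu : Fin N → ℝ) :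
    (∑ i, |sortedCoords lam i - sortedCoords mu i|) ^ α ≤
      (N : ℝ) ^ (α - 1) * ∑ i, |lam i - mu i| ^ α := by
  set d := fun i => |sortedCoords lam i - sortedCoords mu i|
  set e := fun i => |lam i - mu i|
  have sq_rpow (x : ℝ) (hx : 0 ≤ x) : (x ^ 2) ^ (α / 2) = x ^ α := by
    rw [← Real.rpow_natCast, ← Real.rpow_mul hx]; norm_num; ring_nf
  have cauchy_schwarz : (∑ i, d i) ^ 2 ≤ N * ∑ i, e i ^ 2 := by
    calc (∑ i, d i) ^ 2
        ≤ N * ∑ i, d i ^ 2 := by simpa using sq_sum_le_card_mul_sum_sq (s := univ) (f := d)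
      _ ≤ N * ∑ i, e i ^ 2 := by
        gcongr ?_ * ?_; simpa [d, e, sq_abs] using sum_sortedCoords_sub_sq_le lam mu
  have power_mean : (∑ i, e i ^ 2) ^ (α / 2) ≤ (N : ℝ) ^ (α / 2 - 1) * ∑ i, e i ^ α := by
    have h := Real.rpow_sum_le_const_mul_sum_rpow_of_nonneg univ (f := fun i => e i ^ 2)
      (p := α / 2) (by linarith) fun i _ => sq_nonneg (e i)
    rwa [card_univ, Fintype.card_fin, sum_congr rfl fun i _ => sq_rpow (e i) (abs_nonneg _)] at h
  calc (∑ i, d i) ^ α = ((∑ i, d i) ^ 2) ^ (α / 2) := (sq_rpow _ (by positivity)).symm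
    _ ≤ (N * ∑ i, e i ^ 2) ^ (α / 2) := by gcongr
    _ = (N : ℝ) ^ (α / 2) * (∑ i, e i ^ 2) ^ (α / 2) := Real.mul_rpow (by positivity) (by positivity)
    _ ≤ (N : ℝ) ^ (α / 2) * ((N : ℝ) ^ (α / 2 - 1) * ∑ i, e i ^ α) := by gcongr
    _ = (N : ℝ) ^ (α - 1) * ∑ i, e i ^ α := by
        rw [← mul_assoc, ← Real.rpow_add' (by positivity) (by linarith)]; ring_nf

theorem partial_sum_sorted_lipschitz_general
    {N : ℕ} (α : ℝ) (hα : 2 ≤ α)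
    (f : ℝ → ℝ) (hf : LipschitzWith 1 f)
    (l m : ℕ)
    (lam mu : Fin N → ℝ) :
    |(1 / (N : ℝ)) * ∑ i ∈ Finset.univ.filter
        (fun i : Fin N => l ≤ (i : ℕ) + 1 ∧ (i : ℕ) + 1 ≤ m),
        f (sortedCoords lam i) -
      (1 / (N : ℝ)) * ∑ i ∈ Finset.univ.filter
        (fun i : Fin N => l ≤ (i : ℕ) + 1 ∧ (i : ℕ) + 1 ≤ m),
        f (sortedCoords mu i)| ≤
      (N : ℝ) ^ (-(1 / α)) * (∑ i, |lam i - mu i| ^ α) ^ (1 / α) := by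
  rcases N.eq_zero_or_pos with rfl | hN₀
  · simp only [CharP.cast_eq_zero, div_zero, zero_mul, sub_self, abs_zero]
    positivity
  have hN : (0 : ℝ) < N := Nat.cast_pos.mpr hN₀
  have hα₀ : 0 < α := by linarith
  set T := ∑ i, |sortedCoords lam i - sortedCoords mu i|
  set E := ∑ i, |lam i - mu i| ^ α
  have hT : T ≤ (N : ℝ) ^ (1 - 1 / α) * E ^ (1 / α) := by
    have h := sum_abs_sortedCoords_sub_rpow_le hα lam mu
    rwa [← Real.le_rpow_inv_iff_of_pos (by positivity) (by positivity) hα₀,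
      Real.mul_rpow (by positivity) (by positivity), ← Real.rpow_mul hN.le,
      sub_mul, mul_inv_cancel₀ hα₀.ne', one_mul, ← one_div] at h
  calc _ = (1 / N) * |∑ i ∈ _, f (sortedCoords lam i) - ∑ i ∈ _, f (sortedCoords mu i)| := by
        rw [← mul_sub, abs_mul, abs_of_pos (by positivity)]
    _ ≤ (1 / N) * T := by gcongr; exact abs_sum_comp_sub_sum_comp_le hf _ _ _
    _ ≤ (1 / N) * ((N : ℝ) ^ (1 - 1 / α) * E ^ (1 / α)) := by gcongr
    _ = (N : ℝ) ^ (-(1 / α)) * E ^ (1 / α) := by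
        rw [Real.rpow_sub hN, Real.rpow_one, Real.rpow_neg hN.le]; field_simp

theorem partial_sum_sorted_lipschitz
    {N : ℕ} (hN : 1 ≤ N) (α : ℝ) (hα : 2 ≤ α)
    (f : ℝ → ℝ) (hf : LipschitzWith 1 f)
    (l m : ℕ) (hl : 1 ≤ l) (hlm : l ≤ m) (hmN : m ≤ N)
    (lam mu : Fin N → ℝ) :
    |(1 / (N : ℝ)) * ∑ i ∈ Finset.univ.filter
        (fun i : Fin N => l ≤ (i : ℕ) + 1 ∧ (i : ℕ) + 1 ≤ m),
        f (sortedCoords lam i) -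
      (1 / (N : ℝ)) * ∑ i ∈ Finset.univ.filter
        (fun i : Fin N => l ≤ (i : ℕ) + 1 ∧ (i : ℕ) + 1 ≤ m),
        f (sortedCoords mu i)| ≤
      (N : ℝ) ^ (-(1 / α)) * (∑ i, |lam i - mu i| ^ α) ^ (1 / α) :=
  partial_sum_sorted_lipschitz_general α hα f hf l m lam mu
end

section
/- Let p ≥ 2 be an even integer and define φ(λ) = (1 - 2^{1/p - 1})·|Σᵢ λᵢ| + 2^{1/p - 1}·Σᵢ |λᵢ| for λ ∈ ℝ^n. Then for every n ≥ 1 and every λ ∈ ℝ^n with Σᵢ λᵢ^p = 1, one has φ(λ) ≥ 1, and the value 1 is attained at λ = (1, 0, ..., 0). Hence inf{φ(λ) : n ≥ 1, λ ∈ ℝ^n, ‖λ‖_p = 1} = 1. -/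
/-- The functional `φ(λ) = (1 - 2^{1/p-1})|∑ᵢ λᵢ| + 2^{1/p-1} ∑ᵢ |λᵢ|`. -/
noncomputable def phiFun (p : ℕ) {n : ℕ} (lam : Fin n → ℝ) : ℝ :=
  (1 - (2 : ℝ) ^ ((1 : ℝ) / p - 1)) * |∑ i, lam i| +
    (2 : ℝ) ^ ((1 : ℝ) / p - 1) * ∑ i, |lam i|

/-!
Split `λ` into positive and negative parts with sums `P` and `N`, so that
`φ(λ) = (1 - c)|P - N| + c (P + N)` with `c = 2^{1/p-1}`, while
`1 = ∑ λᵢ^p = ∑ (λᵢ⁺)^p + ∑ (λᵢ⁻)^p ≤ P^p + N^p`.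
If `N ≤ P`, then `φ(λ) = P + (2^{1/p} - 1) N`, and Minkowski's inequality applied to
`(P, N) = (P - N) • (1, 0) + N • (1, 1)` gives `‖(P, N)‖_p ≤ (P - N) + 2^{1/p} N = φ(λ)`.
-/

open Finset

theorem Finset.sum_pow_le_pow_sum {R ι : Type*} [Semiring R] [PartialOrder R] [IsOrderedRing R]
    (s : Finset ι) {f : ι → R} (hf : ∀ i ∈ s, 0 ≤ f i) {n : ℕ} (hn : n ≠ 0) :
    ∑ i ∈ s, f i ^ n ≤ (∑ i ∈ s, f i) ^ n := by
  induction s using Finset.cons_induction with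
  | empty => simp [zero_pow hn]
  | cons a s ha ih =>
    rw [sum_cons, sum_cons]
    have hs := (forall_mem_cons ha _).mp hf
    calc f a ^ n + ∑ i ∈ s, f i ^ n ≤ f a ^ n + (∑ i ∈ s, f i) ^ n := by gcongr; exact ih hs.2
      _ ≤ (f a + ∑ i ∈ s, f i) ^ n := pow_add_pow_le hs.1 (sum_nonneg hs.2) hn

theorem Even.pow_eq_posPart_pow_add_negPart_pow {R : Type*} [Ring R] [LinearOrder R]
    [IsStrictOrderedRing R] {n : ℕ} (hn : Even n) (hn0 : n ≠ 0) (a : R) :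
    a ^ n = a⁺ ^ n + a⁻ ^ n := by
  rcases le_total 0 a with ha | ha
  · rw [posPart_of_nonneg ha, negPart_of_nonneg ha, zero_pow hn0, add_zero]
  · rw [posPart_of_nonpos ha, negPart_of_nonpos ha, zero_pow hn0, zero_add, hn.neg_pow]

theorem Real.rpow_add_rpow_rpow_one_div_le_add_mul {p : ℝ} (hp : 1 ≤ p) {M m : ℝ} (hm : 0 ≤ m)
    (hmM : m ≤ M) : (M ^ p + m ^ p) ^ (1 / p) ≤ M + (2 ^ (1 / p) - 1) * m := by
  have hp0 : p ≠ 0 := by positivity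
  have h := Real.Lp_add_le_of_nonneg univ hp (f := ![M - m, 0]) (g := ![m, m])
    (by simp [Fin.forall_fin_two, hmM]) (by simp [Fin.forall_fin_two, hm])
  simp only [Fin.sum_univ_two, Matrix.cons_val_zero, Matrix.cons_val_one,
    sub_add_cancel, zero_add, Real.zero_rpow hp0, add_zero, ← two_mul] at h
  rw [Real.mul_rpow zero_le_two (by positivity), one_div, Real.rpow_rpow_inv (by linarith) hp0,
    Real.rpow_rpow_inv hm hp0] at h
  rw [one_div]
  linarith

theorem one_le_add_mul_of_one_le_pow_add_pow {p : ℕ} (hp : p ≠ 0) {M m : ℝ} (hm : 0 ≤ m)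
    (hmM : m ≤ M) (h : 1 ≤ M ^ p + m ^ p) : 1 ≤ M + (2 ^ ((1 : ℝ) / p) - 1) * m := by
  have hM : 0 ≤ M := hm.trans hmM
  calc (1 : ℝ) = 1 ^ ((1 : ℝ) / p) := (Real.one_rpow _).symm
    _ ≤ (M ^ (p : ℝ) + m ^ (p : ℝ)) ^ ((1 : ℝ) / p) := by
      rw [Real.rpow_natCast, Real.rpow_natCast]
      gcongr
    _ ≤ M + (2 ^ ((1 : ℝ) / p) - 1) * m :=
      Real.rpow_add_rpow_rpow_one_div_le_add_mul (mod_cast Nat.one_le_iff_ne_zero.mpr hp) hm hmM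

theorem one_le_phi_of_one_le_pow_add_pow {p : ℕ} (hp : p ≠ 0) {P N : ℝ} (hP : 0 ≤ P) (hN : 0 ≤ N)
    (h : 1 ≤ P ^ p + N ^ p) :
    1 ≤ (1 - 2 ^ ((1 : ℝ) / p - 1)) * |P - N| + 2 ^ ((1 : ℝ) / p - 1) * (P + N) := by
  wlog hNP : N ≤ P generalizing P N
  · rw [abs_sub_comm, add_comm P N]
    exact this hN hP (by rwa [add_comm]) (le_of_not_ge hNP)
  have hc : (2 : ℝ) ^ ((1 : ℝ) / p - 1) = 2 ^ ((1 : ℝ) / p) / 2 := Real.rpow_sub_one two_ne_zero _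
  rw [abs_of_nonneg (sub_nonneg.mpr hNP), hc]
  linarith [one_le_add_mul_of_one_le_pow_add_pow hp hN hNP h]

theorem one_le_phiFun {p : ℕ} (hp : p ≠ 0) (hpe : Even p) {n : ℕ} (lam : Fin n → ℝ)
    (h : ∑ i, lam i ^ p = 1) : 1 ≤ phiFun p lam := by
  have hsum : ∑ i, lam i = ∑ i, (lam i)⁺ - ∑ i, (lam i)⁻ := by
    simp only [← sum_sub_distrib, posPart_sub_negPart]
  have habs : ∑ i, |lam i| = ∑ i, (lam i)⁺ + ∑ i, (lam i)⁻ := by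
    simp only [← sum_add_distrib, posPart_add_negPart]
  have hpow : 1 ≤ (∑ i, (lam i)⁺) ^ p + (∑ i, (lam i)⁻) ^ p := by
    calc (1 : ℝ) = ∑ i, (lam i)⁺ ^ p + ∑ i, (lam i)⁻ ^ p := by
          rw [← h, ← sum_add_distrib]
          exact sum_congr rfl fun i _ => hpe.pow_eq_posPart_pow_add_negPart_pow hp (lam i)
      _ ≤ _ := by
          gcongr <;> exact sum_pow_le_pow_sum _ (fun i _ => by positivity) hp
  rw [phiFun, hsum, habs]
  exact one_le_phi_of_one_le_pow_add_pow hp (sum_nonneg fun i _ => posPart_nonneg _)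
    (sum_nonneg fun i _ => negPart_nonneg _) hpow

theorem phiFun_ge_one_and_infimum
    (p : ℕ) (hp : 2 ≤ p) (hpe : Even p) :
    (∀ (n : ℕ), 1 ≤ n → ∀ lam : Fin n → ℝ,
        ∑ i, lam i ^ p = 1 → 1 ≤ phiFun p lam) ∧
      IsLeast {x : ℝ | ∃ (n : ℕ) (lam : Fin n → ℝ),
          1 ≤ n ∧ ∑ i, lam i ^ p = 1 ∧ x = phiFun p lam} 1 := by
  have hp0 : p ≠ 0 := by omega
  refine ⟨fun n _ lam h => one_le_phiFun hp0 hpe lam h, ⟨1, fun _ => 1, le_rfl, by simp, ?_⟩, ?_⟩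
  · simp [phiFun]
  · rintro x ⟨n, lam, -, h, rfl⟩
    exact one_le_phiFun hp0 hpe lam h
end

section
/- Let α ∈ (0, 2) and let A be an n×n Hermitian matrix with eigenvalues λ₁,...,λ_n. Suppose p ≥ 2 is an even integer with α ≤ p and tr(A^p) = 1. Then Σ_{i,j} |A_{ij}|^α ≥ 1. -/
/-!
Since `∑ λᵢ ^ p = 1` with `p` even, every `|λᵢ| ≤ 1`, hence `∑ λᵢ ^ 2 ≥ ∑ λᵢ ^ p = 1`; and
`∑ λᵢ ^ 2 = tr (Aᴴ A) = ∑ |Aᵢⱼ| ^ 2`. If some `|Aᵢⱼ| ≥ 1`, that entry alone gives the bound;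
otherwise `|Aᵢⱼ| ^ α ≥ |Aᵢⱼ| ^ 2` entrywise because `α ≤ 2`.
-/

open Finset

namespace Matrix

variable {m n 𝕜 : Type*} [Fintype m] [Fintype n] [RCLike 𝕜]

theorem trace_conjTranspose_mul_self (A : Matrix m n 𝕜) :
    (Aᴴ * A).trace = ((∑ i, ∑ j, ‖A i j‖ ^ 2 : ℝ) : 𝕜) := by
  simp only [trace, diag_apply, mul_apply, conjTranspose_apply, RCLike.star_def, RCLike.conj_mul]
  push_cast
  exact sum_comm

namespace IsHermitian

variable [DecidableEq n] {A : Matrix n n 𝕜}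

theorem trace_pow (hA : A.IsHermitian) (k : ℕ) :
    (A ^ k).trace = ∑ i, (hA.eigenvalues i : 𝕜) ^ k := by
  conv_lhs => rw [hA.spectral_theorem, ← map_pow, Unitary.conjStarAlgAut_apply, trace_mul_cycle,
    Unitary.coe_star_mul_self, one_mul, diagonal_pow, trace_diagonal]
  simp

theorem sum_norm_sq_entries_eq_sum_eigenvalues_sq (hA : A.IsHermitian) :
    ∑ i, ∑ j, ‖A i j‖ ^ 2 = ∑ i, hA.eigenvalues i ^ 2 := by
  have h := hA.trace_pow 2
  rw [sq A, ← congrArg (· * A) hA, trace_conjTranspose_mul_self] at h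
  exact_mod_cast h

end IsHermitian

end Matrix

namespace Finset

variable {ι : Type*} {s : Finset ι}

theorem sum_pow_le_sum_sq_of_sum_pow_le_one {f : ι → ℝ} {p : ℕ} (hp : p ≠ 0) (hpe : Even p)
    (h : ∑ i ∈ s, f i ^ p ≤ 1) : ∑ i ∈ s, f i ^ p ≤ ∑ i ∈ s, f i ^ 2 := by
  obtain ⟨k, rfl⟩ := hpe
  have hk : k ≠ 0 := by omega
  simp only [← two_mul, pow_mul] at h ⊢
  refine sum_le_sum fun i hi => pow_le_of_le_one (sq_nonneg _) ?_ hk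
  have hi_le := (single_le_sum (fun j _ => pow_nonneg (sq_nonneg (f j)) k) hi).trans h
  exact (pow_le_one_iff_of_nonneg (sq_nonneg _) hk).1 hi_le

theorem one_le_sum_rpow_of_one_le_sum_sq {f : ι → ℝ} (hf : ∀ i ∈ s, 0 ≤ f i) {α : ℝ}
    (hα0 : 0 ≤ α) (hα2 : α ≤ 2) (h : 1 ≤ ∑ i ∈ s, f i ^ 2) : 1 ≤ ∑ i ∈ s, f i ^ α := by
  by_cases hbig : ∃ i ∈ s, 1 ≤ f i
  · obtain ⟨i, hi, h1⟩ := hbig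
    exact (Real.one_le_rpow h1 hα0).trans
      (single_le_sum (fun j hj => Real.rpow_nonneg (hf j hj) α) hi)
  · push Not at hbig
    refine h.trans (sum_le_sum fun i hi => ?_)
    rw [← Real.rpow_ofNat]
    exact Real.rpow_le_rpow_of_exponent_ge' (hf i hi) (hbig i hi).le hα0 hα2

end Finset

theorem sum_entries_rpow_ge_one_general
    (α : ℝ) (hα0 : 0 < α) (hα2 : α < 2)
    (p : ℕ) (hp : 2 ≤ p) (hpe : Even p)
    {n : ℕ} (A : Matrix (Fin n) (Fin n) ℂ) (hA : A.IsHermitian)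
    (htr : (A ^ p).trace = 1) :
    1 ≤ ∑ i, ∑ j, ‖A i j‖ ^ α := by
  have h_eig_pow : ∑ i, hA.eigenvalues i ^ p = 1 := by
    simp_rw [hA.trace_pow, ← RCLike.ofReal_pow, ← RCLike.ofReal_sum] at htr
    exact RCLike.ofReal_inj.1 (htr.trans RCLike.ofReal_one.symm)
  have h_eig_sq : 1 ≤ ∑ i, hA.eigenvalues i ^ 2 :=
    h_eig_pow ▸ sum_pow_le_sum_sq_of_sum_pow_le_one (by omega) hpe h_eig_pow.le
  rw [← hA.sum_norm_sq_entries_eq_sum_eigenvalues_sq, ← Fintype.sum_prod_type'] at h_eig_sq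
  rw [← Fintype.sum_prod_type']
  exact one_le_sum_rpow_of_one_le_sum_sq (fun _ _ => norm_nonneg _) hα0.le hα2.le h_eig_sq

theorem sum_entries_rpow_ge_one
    (α : ℝ) (hα0 : 0 < α) (hα2 : α < 2)
    (p : ℕ) (hp : 2 ≤ p) (hpe : Even p) (hαp : α ≤ p)
    {n : ℕ} (A : Matrix (Fin n) (Fin n) ℂ) (hA : A.IsHermitian)
    (htr : (A ^ p).trace = 1) :
    1 ≤ ∑ i, ∑ j, ‖A i j‖ ^ α :=
  sum_entries_rpow_ge_one_general α hα0 hα2 p hp hpe A hA htr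
end
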